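/- Let r > 0 and α > 0 with 0 < rα < 2, and let ρ(x) = r 2^(r−1) (1−x)^(r−1) on (1/2, 1]. Then the weighted mean maximum square displacement ⟨Δx²_n⟩_ρ = 2 ∫_{1/2}^1 min(m̄_α(x), n)² ρ(x) dx is asymptotic to (2^(r+1)/(2−rα)) n^(2−rα) as n → ∞. -/

import Mathlib

/-!
For `x < 1` the integrand has the layer-cake form
`min (m̄ x) n ^ 2 = ∑_{k<n} (2k+1) · 𝟙[ℓ⁺_k < x]`, so the integral equals
`∑_{k<n} (2k+1) ∫_{ℓ⁺_k}^1 ρ = 2^(r-1) ∑_{k<n} (2k+1) (k + 2^(1/α))^(-rα)`.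
With `s = rα < 2`, the summand is asymptotic to `2 k^(1-s)`, and so is the telescoping term
`2/(2-s) ((k+1)^(2-s) - k^(2-s))`; summing an asymptotic equivalence against a divergent
nonnegative series preserves it, whence the sum is asymptotic to `2/(2-s) n^(2-s)`.
-/

open Filter Topology

/-- ℓ⁺_m(α) = 1 - (m + 2^(1/α))^(-α) -/
noncomputable def ellp (α : ℝ) (m : ℕ) : ℝ := 1 - ((m : ℝ) + (2 : ℝ) ^ (1/α)) ^ (-α)

/-- m̄_α(x) = min { m ∈ ℕ : ℓ⁺_m(α) ≥ x } -/
noncomputable def mbar (α x : ℝ) : ℕ := sInf {m : ℕ | x ≤ ellp α m}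

/-- The density ρ(x) = r 2^(r-1) (1-x)^(r-1) on (1/2, 1]. -/
noncomputable def rho (r x : ℝ) : ℝ := r * (2 : ℝ) ^ (r - 1) * (1 - x) ^ (r - 1)

open MeasureTheory Asymptotics Finset

section ellp

variable {α : ℝ}

lemma one_sub_ellp (m : ℕ) : 1 - ellp α m = ((m : ℝ) + (2 : ℝ) ^ (1 / α)) ^ (-α) := by
  rw [ellp, sub_sub_cancel]

lemma ellp_lt_one (m : ℕ) : ellp α m < 1 := by
  rw [← sub_pos, one_sub_ellp]
  positivity

lemma ellp_zero (hα : α ≠ 0) : ellp α 0 = 1 / 2 := by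
  rw [ellp, Nat.cast_zero, zero_add, ← Real.rpow_mul zero_le_two, one_div_mul_eq_div,
    neg_div, div_self hα, Real.rpow_neg_one]
  norm_num

lemma ellp_mono (hα : 0 < α) : Monotone (ellp α) := fun m n hmn => by
  rw [ellp, ellp, sub_le_sub_iff_left]
  exact Real.rpow_le_rpow_of_nonpos (by positivity) (by gcongr) (neg_nonpos.2 hα.le)

lemma tendsto_ellp (hα : 0 < α) : Tendsto (ellp α) atTop (𝓝 1) := by
  have h := (tendsto_rpow_neg_atTop hα).comp
    (tendsto_atTop_add_const_right _ ((2 : ℝ) ^ (1 / α)) tendsto_natCast_atTop_atTop)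
  unfold ellp
  simpa using (tendsto_const_nhds (x := (1 : ℝ))).sub h

lemma mbar_le_iff (hα : 0 < α) {x : ℝ} (hx : x < 1) {n : ℕ} : mbar α x ≤ n ↔ x ≤ ellp α n := by
  refine ⟨fun h => ?_, fun h => Nat.sInf_le h⟩
  have hne : {m : ℕ | x ≤ ellp α m}.Nonempty :=
    ((tendsto_ellp hα).eventually (lt_mem_nhds hx)).exists.imp fun _ hm => hm.le
  exact (Nat.sInf_mem hne).trans (ellp_mono hα h)

lemma lt_mbar_iff (hα : 0 < α) {x : ℝ} (hx : x < 1) {n : ℕ} : n < mbar α x ↔ ellp α n < x := by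
  simpa only [not_le] using (mbar_le_iff hα hx).not

end ellp

lemma sq_min_eq_sum_range (m n : ℕ) :
    ((min m n : ℕ) : ℝ) ^ 2 = ∑ k ∈ range n, if k < m then 2 * (k : ℝ) + 1 else 0 := by
  induction n with
  | zero => simp
  | succ n ih =>
    rw [sum_range_succ, ← ih]
    split_ifs with h
    · rw [min_eq_right h.le, min_eq_right h]
      push_cast
      ring
    · rw [min_eq_left (not_lt.1 h), min_eq_left (by omega)]
      simp

lemma intervalIntegral.integral_indicator_Ioi {f : ℝ → ℝ} {μ : Measure ℝ} {a b c : ℝ}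
    (h : c ∈ Set.Icc a b) :
    ∫ x in a..b, (Set.Ioi c).indicator f x ∂μ = ∫ x in c..b, f x ∂μ := by
  rw [intervalIntegral.integral_of_le h.2, intervalIntegral.integral_of_le (h.1.trans h.2),
    MeasureTheory.integral_indicator measurableSet_Ioi, Measure.restrict_restrict measurableSet_Ioi,
    Set.inter_comm, Set.Ioc_inter_Ioi, sup_eq_right.2 h.1]

lemma IntervalIntegrable.indicator {E : Type*} [NormedAddCommGroup E] {f : ℝ → E}
    {μ : Measure ℝ} {a b : ℝ} (hf : IntervalIntegrable f μ a b) {s : Set ℝ}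
    (hs : MeasurableSet s) : IntervalIntegrable (s.indicator f) μ a b :=
  ⟨hf.1.indicator hs, hf.2.indicator hs⟩

section rho

variable {r : ℝ}

lemma intervalIntegrable_rho (hr : 0 < r) (a b : ℝ) : IntervalIntegrable (rho r) volume a b := by
  have h := (intervalIntegral.intervalIntegrable_rpow' (r := r - 1) (by linarith)
    (a := 1 - a) (b := 1 - b)).comp_sub_left 1
  simp only [sub_sub_cancel] at h
  exact h.const_mul _

lemma integral_rho (hr : 0 < r) (c : ℝ) : ∫ x in c..1, rho r x = 2 ^ (r - 1) * (1 - c) ^ r := by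
  simp only [rho, intervalIntegral.integral_const_mul]
  rw [intervalIntegral.integral_comp_sub_left (fun t => t ^ (r - 1)) 1,
    integral_rpow (Or.inl (by linarith)), sub_add_cancel, sub_self, Real.zero_rpow hr.ne', sub_zero]
  field_simp

end rho

lemma integral_sq_min_mbar_mul_rho {α r : ℝ} (hα : 0 < α) (hr : 0 < r) (n : ℕ) :
    ∫ x in (1/2 : ℝ)..1, ((min (mbar α x) n : ℕ) : ℝ) ^ 2 * rho r x
      = 2 ^ (r - 1) * ∑ k ∈ range n, (2 * (k : ℝ) + 1) * ((k : ℝ) + 2 ^ (1 / α)) ^ (-(r * α)) := by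
  have hlayer : ∀ x < 1, ((min (mbar α x) n : ℕ) : ℝ) ^ 2 * rho r x
      = ∑ k ∈ range n, (2 * (k : ℝ) + 1) * (Set.Ioi (ellp α k)).indicator (rho r) x := by
    intro x hx
    simp only [sq_min_eq_sum_range, sum_mul, Set.indicator_apply, Set.mem_Ioi,
      lt_mbar_iff hα hx, ite_mul, zero_mul, mul_ite, mul_zero]
  have hellp : ∀ k, ellp α k ∈ Set.Icc (1 / 2 : ℝ) 1 := fun k =>
    ⟨ellp_zero hα.ne' ▸ ellp_mono hα k.zero_le, (ellp_lt_one k).le⟩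
  calc ∫ x in (1/2 : ℝ)..1, ((min (mbar α x) n : ℕ) : ℝ) ^ 2 * rho r x
      = ∫ x in (1/2 : ℝ)..1, ∑ k ∈ range n,
          (2 * (k : ℝ) + 1) * (Set.Ioi (ellp α k)).indicator (rho r) x := by
        -- `mbar α 1 = sInf ∅ = 0`, so the layer-cake identity only holds away from `x = 1`.
        refine intervalIntegral.integral_congr_ae ?_
        filter_upwards [Measure.ae_ne volume (1 : ℝ)] with x hx1 hx
        exact hlayer x (lt_of_le_of_ne (Set.uIoc_of_le (by norm_num : (1 / 2 : ℝ) ≤ 1) ▸ hx).2 hx1)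
    _ = ∑ k ∈ range n, (2 * (k : ℝ) + 1) * ∫ x in ellp α k..1, rho r x := by
        rw [intervalIntegral.integral_finsetSum fun k _ =>
          (((intervalIntegrable_rho hr _ _).indicator measurableSet_Ioi).const_mul _)]
        simp only [intervalIntegral.integral_const_mul,
          intervalIntegral.integral_indicator_Ioi (hellp _)]
    _ = _ := by
        simp only [integral_rho hr, one_sub_ellp, mul_sum]
        refine sum_congr rfl fun k _ => ?_
        rw [← Real.rpow_mul (by positivity), neg_mul, mul_comm α]
        ring

lemma isEquivalent_rpow_succ_sub_rpow {p : ℝ} (hp : p ≠ 0) :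
    (fun k : ℕ => ((k : ℝ) + 1) ^ p - (k : ℝ) ^ p) ~[atTop] fun k => p * (k : ℝ) ^ (p - 1) := by
  have hderiv : HasDerivAt (fun x : ℝ => x ^ p) p 1 := by
    simpa using Real.hasDerivAt_rpow_const (x := 1) (p := p) (Or.inl one_ne_zero)
  have hslope : Tendsto (fun k : ℕ => (k : ℝ) * ((1 + (k : ℝ)⁻¹) ^ p - 1)) atTop (𝓝 p) := by
    simpa [Function.comp_def] using hderiv.tendsto_slope_zero_right.comp
      (tendsto_inv_atTop_nhdsGT_zero.comp tendsto_natCast_atTop_atTop)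
  refine (((isEquivalent_const_iff_tendsto hp).2 hslope).mul
    (IsEquivalent.refl (u := fun k : ℕ => (k : ℝ) ^ (p - 1)))).congr_left ?_
  filter_upwards [eventually_gt_atTop 0] with k hk
  have hk : (0 : ℝ) < k := by exact_mod_cast hk
  have hsplit : ((k : ℝ) + 1) ^ p = (k : ℝ) ^ p * (1 + (k : ℝ)⁻¹) ^ p := by
    rw [← Real.mul_rpow hk.le (by positivity), mul_add, mul_inv_cancel₀ hk.ne', mul_one]
  rw [Pi.mul_apply, hsplit, Real.rpow_sub_one hk.ne']
  field_simp

lemma isEquivalent_odd_mul_rpow_add (c s : ℝ) :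
    (fun k : ℕ => (2 * (k : ℝ) + 1) * ((k : ℝ) + c) ^ (-s)) ~[atTop]
      fun k => 2 * (k : ℝ) ^ (1 - s) := by
  have hk : Tendsto (norm ∘ fun k : ℕ => (k : ℝ)) atTop atTop :=
    tendsto_norm_atTop_atTop.comp tendsto_natCast_atTop_atTop
  have hlin : (fun k : ℕ => 2 * (k : ℝ) + 1) ~[atTop] fun k => 2 * (k : ℝ) :=
    IsEquivalent.refl.add_const_of_norm_tendsto_atTop
      (tendsto_norm_atTop_atTop.comp (tendsto_natCast_atTop_atTop.const_mul_atTop two_pos))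
  have hpow : (fun k : ℕ => ((k : ℝ) + c) ^ (-s)) ~[atTop] fun k => (k : ℝ) ^ (-s) :=
    (IsEquivalent.refl.add_const_of_norm_tendsto_atTop hk).rpow (fun k => Nat.cast_nonneg k)
  refine (hlin.mul hpow).congr_right ?_
  filter_upwards [eventually_gt_atTop 0] with k hk
  have hk : (0 : ℝ) < k := by exact_mod_cast hk
  rw [Pi.mul_apply, sub_eq_add_neg, Real.rpow_add hk, Real.rpow_one, mul_assoc]

lemma Asymptotics.IsEquivalent.sum_range {f g : ℕ → ℝ} (h : f ~[atTop] g) (hg : 0 ≤ g)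
    (hsum : Tendsto (fun n => ∑ i ∈ range n, g i) atTop atTop) :
    (fun n => ∑ i ∈ range n, f i) ~[atTop] fun n => ∑ i ∈ range n, g i := by
  simpa [IsEquivalent, Pi.sub_def, sum_sub_distrib] using h.isLittleO.sum_range hg hsum

lemma sum_range_rpow_succ_sub_rpow {p : ℝ} (hp : p ≠ 0) (n : ℕ) :
    ∑ k ∈ range n, (((k : ℝ) + 1) ^ p - (k : ℝ) ^ p) = (n : ℝ) ^ p := by
  simpa [Real.zero_rpow hp] using sum_range_sub (fun k : ℕ => (k : ℝ) ^ p) n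

lemma isEquivalent_sum_odd_mul_rpow_add (c : ℝ) {s : ℝ} (hs : s < 2) :
    (fun n : ℕ => ∑ k ∈ range n, (2 * (k : ℝ) + 1) * ((k : ℝ) + c) ^ (-s)) ~[atTop]
      fun n => 2 / (2 - s) * (n : ℝ) ^ (2 - s) := by
  have hp : 0 < 2 - s := by linarith
  set g : ℕ → ℝ := fun k => 2 / (2 - s) * (((k : ℝ) + 1) ^ (2 - s) - (k : ℝ) ^ (2 - s))
  have hsum_g : ∀ n : ℕ, ∑ k ∈ range n, g k = 2 / (2 - s) * (n : ℝ) ^ (2 - s) := fun n => by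
    rw [← mul_sum, sum_range_rpow_succ_sub_rpow hp.ne']
  have hg : (fun k : ℕ => (2 * (k : ℝ) + 1) * ((k : ℝ) + c) ^ (-s)) ~[atTop] g := by
    refine (isEquivalent_odd_mul_rpow_add c s).trans ?_
    refine IsEquivalent.symm (((IsEquivalent.refl (u := fun _ : ℕ => 2 / (2 - s))).mul
      (isEquivalent_rpow_succ_sub_rpow hp.ne')).congr_right (Eventually.of_forall fun k => ?_))
    simp only [Pi.mul_apply]
    field_simp
    ring_nf
  have hg_nonneg : 0 ≤ g := fun k => mul_nonneg (by positivity)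
    (sub_nonneg.2 (Real.rpow_le_rpow (Nat.cast_nonneg k) (by linarith) hp.le))
  have := hg.sum_range hg_nonneg (by
    simp_rw [hsum_g]
    exact ((tendsto_rpow_atTop hp).comp tendsto_natCast_atTop_atTop).const_mul_atTop
      (by positivity))
  simpa only [hsum_g] using this

theorem stmt_19 (α r : ℝ) (hr : 0 < r) (hα : 0 < α) (hrα : r * α < 2) :
    Tendsto
      (fun n : ℕ =>
        (2 * ∫ x in (1/2 : ℝ)..1, ((min (mbar α x) n : ℕ) : ℝ) ^ 2 * rho r x) /
          (((2 : ℝ) ^ (r + 1) / (2 - r * α)) * (n : ℝ) ^ ((2 : ℝ) - r * α)))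
      atTop (𝓝 1) := by
  have hne : ∀ᶠ n : ℕ in atTop, 2 / (2 - r * α) * (n : ℝ) ^ (2 - r * α) ≠ 0 := by
    filter_upwards [eventually_gt_atTop 0] with n hn
    have : 0 < 2 - r * α := by linarith
    positivity
  refine ((isEquivalent_iff_tendsto_one hne).1
    (isEquivalent_sum_odd_mul_rpow_add (2 ^ (1 / α)) hrα)).congr fun n => ?_
  rw [Pi.div_apply, integral_sq_min_mbar_mul_rho hα hr]
  generalize ∑ k ∈ range n, (2 * (k : ℝ) + 1) * ((k : ℝ) + 2 ^ (1 / α)) ^ (-(r * α)) = S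
  generalize (n : ℝ) ^ (2 - r * α) = N
  have h2r : (2 : ℝ) ^ (r + 1) = 2 * 2 * 2 ^ (r - 1) := by
    rw [show r + 1 = r - 1 + 2 by ring, Real.rpow_add two_pos, Real.rpow_two]
    ring
  rw [h2r, show 2 * 2 * 2 ^ (r - 1) / (2 - r * α) * N = (2 * 2 ^ (r - 1)) * (2 / (2 - r * α) * N)
    by ring, ← mul_assoc, mul_div_mul_left _ _ (by positivity)]
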